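/- arXiv:0908.4031 — 6 statements merged into one kernel-verified Lean document; each statement's English description precedes it below -/
import Mathlib

section
/- The only triples (x, y, c) of integers with x ≥ 1, y ≥ 1, and 2^x - 3^y = c with |c| ≤ 10 are (2,1,1), (1,1,-1), (3,2,-1), (3,1,5), (5,3,5), (2,2,-5), (4,2,7), (1,2,-7). In particular, if x > 5 or y > 3, then |2^x - 3^y| > 10. -/
/-!
For `x ≤ 5` and `y ≤ 3` the solutions are found by inspection, and if exactly one of `x ≥ 6`,
`y ≥ 4` holds then `2 ^ x` and `3 ^ y` differ by more than `10` by size alone. For `x ≥ 6` and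
`y ≥ 4` one works modulo `88128 = 2 ^ 6 * 3 ^ 4 * 17`: since `2` has order `216` modulo
`3 ^ 4 * 17` and `3` has order `16` modulo `2 ^ 6 * 17`, the residue of `2 ^ x - 3 ^ y` depends
only on `x mod 216` and `y mod 16`, and a check of these `3456` residues shows that none of them
is within `10` of `0`.
-/

theorem pow_add_eq_pow_add_mod {M : Type*} [Monoid M] {x : M} {k n : ℕ}
    (h : x ^ (k + n) = x ^ k) (m : ℕ) : x ^ (k + m) = x ^ (k + m % n) := by
  have hperiod : ∀ j, x ^ (k + n * j) = x ^ k := by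
    intro j
    induction j with
    | zero => simp
    | succ j ih => rw [Nat.mul_succ, ← add_assoc, pow_add, ih, ← pow_add, h]
  conv_lhs => rw [← Nat.div_add_mod m n, ← add_assoc, pow_add, hperiod, ← pow_add]

section Residues

set_option maxRecDepth 10000

theorem two_pow_add_216_zmod : (2 : ZMod 88128) ^ (6 + 216) = 2 ^ 6 := by decide

theorem three_pow_add_16_zmod : (3 : ZMod 88128) ^ (4 + 16) = 3 ^ 4 := by decide

theorem ten_lt_abs_valMinAbs_two_pow_sub_three_pow :
    ∀ a < 216, ∀ b < 16, 10 < |((2 : ZMod 88128) ^ (6 + a) - 3 ^ (4 + b)).valMinAbs| := by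
  decide

end Residues

theorem ten_lt_abs_two_pow_sub_three_pow_of_le {x y : ℕ} (hx : 6 ≤ x) (hy : 4 ≤ y) :
    10 < |(2 : ℤ) ^ x - 3 ^ y| := by
  obtain ⟨s, rfl⟩ := Nat.exists_eq_add_of_le hx
  obtain ⟨t, rfl⟩ := Nat.exists_eq_add_of_le hy
  by_contra! hsmall
  have hval : (((2 : ℤ) ^ (6 + s) - 3 ^ (4 + t) : ℤ) : ZMod 88128).valMinAbs
      = 2 ^ (6 + s) - 3 ^ (4 + t) := by
    rw [ZMod.valMinAbs_spec]
    refine ⟨rfl, ?_, ?_⟩ <;> push_cast <;> linarith [abs_le.1 hsmall]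
  push_cast at hval
  rw [pow_add_eq_pow_add_mod two_pow_add_216_zmod s,
    pow_add_eq_pow_add_mod three_pow_add_16_zmod t] at hval
  have hres := ten_lt_abs_valMinAbs_two_pow_sub_three_pow (s % 216) (s.mod_lt (by norm_num))
    (t % 16) (t.mod_lt (by norm_num))
  rw [hval] at hres
  exact hres.not_ge hsmall

theorem ten_lt_abs_two_pow_sub_three_pow {x y : ℕ} (h : 5 < x ∨ 3 < y) :
    10 < |(2 : ℤ) ^ x - 3 ^ y| := by
  rcases le_or_gt 6 x with hx | hx <;> rcases le_or_gt 4 y with hy | hy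
  · exact ten_lt_abs_two_pow_sub_three_pow_of_le hx hy
  · have h2 : (2 : ℤ) ^ 6 ≤ 2 ^ x := pow_le_pow_right₀ (by norm_num) hx
    have h3 : (3 : ℤ) ^ y ≤ 3 ^ 3 := pow_le_pow_right₀ (by norm_num) (by omega)
    exact lt_abs.2 (Or.inl (by linarith))
  · have h2 : (2 : ℤ) ^ x ≤ 2 ^ 5 := pow_le_pow_right₀ (by norm_num) (by omega)
    have h3 : (3 : ℤ) ^ 4 ≤ 3 ^ y := pow_le_pow_right₀ (by norm_num) hy
    exact lt_abs.2 (Or.inr (by linarith))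
  · omega

theorem herschfeld_small_c :
    (∀ (x y : ℕ) (c : ℤ), 1 ≤ x → 1 ≤ y → (2 : ℤ)^x - 3^y = c → |c| ≤ 10 →
      ((x, y, c) = (2, 1, 1) ∨ (x, y, c) = (1, 1, -1) ∨ (x, y, c) = (3, 2, -1) ∨
        (x, y, c) = (3, 1, 5) ∨ (x, y, c) = (5, 3, 5) ∨ (x, y, c) = (2, 2, -5) ∨
        (x, y, c) = (4, 2, 7) ∨ (x, y, c) = (1, 2, -7))) ∧
    (∀ x y : ℕ, 1 ≤ x → 1 ≤ y → (5 < x ∨ 3 < y) → 10 < |(2 : ℤ)^x - 3^y|) := by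
  refine ⟨fun x y c hx hy hc habs => ?_, fun x y _ _ => ten_lt_abs_two_pow_sub_three_pow⟩
  subst hc
  have hx5 : x ≤ 5 := not_lt.1 fun h => (ten_lt_abs_two_pow_sub_three_pow (.inl h)).not_ge habs
  have hy3 : y ≤ 3 := not_lt.1 fun h => (ten_lt_abs_two_pow_sub_three_pow (.inr h)).not_ge habs
  interval_cases x <;> interval_cases y <;> revert habs <;> norm_num
end

section
/- If p is an odd prime and n ≥ 2 is an integer, then the equation x^2 - 1 = p^n has no solution in positive integers x. -/
/-!
Since `x ^ 2 - 1 = (x - 1) * (x + 1)`, both factors are powers of `p`, say `p ^ a` and `p ^ b`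
with `p ^ a + 2 = p ^ b`. For odd `p` this forces `a = 0`, otherwise `p ∣ 2`; hence `x = 2`
and `p ^ n = 3`, which is impossible for `n ≥ 2`.
-/

namespace Nat.Prime

theorem eq_zero_of_pow_add_two_eq_pow {p a b : ℕ} (hp : p.Prime) (hp2 : p ≠ 2)
    (h : p ^ a + 2 = p ^ b) : a = 0 := by
  by_contra ha
  have hb : b ≠ 0 := by
    rintro rfl
    rw [pow_zero] at h
    omega
  have hdvd : p ∣ 2 := (Nat.dvd_add_right (dvd_pow_self p ha)).1 (h ▸ dvd_pow_self p hb)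
  exact hp2 ((Nat.prime_dvd_prime_iff_eq hp Nat.prime_two).1 hdvd)

theorem eq_two_of_sq_eq_pow_add_one {p n x : ℕ} (hp : p.Prime) (hp2 : p ≠ 2)
    (h : x ^ 2 = p ^ n + 1) : x = 2 := by
  have hfac : (x + 1) * (x - 1) = p ^ n := by
    rw [← Nat.sq_sub_sq, one_pow, h, Nat.add_sub_cancel]
  obtain ⟨a, -, ha⟩ := (Nat.dvd_prime_pow hp).1 (Dvd.intro_left _ hfac)
  obtain ⟨b, -, hb⟩ := (Nat.dvd_prime_pow hp).1 (Dvd.intro _ hfac)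
  have hpa : 0 < p ^ a := pow_pos hp.pos a
  have hab : p ^ a + 2 = p ^ b := by omega
  have ha0 : a = 0 := hp.eq_zero_of_pow_add_two_eq_pow hp2 hab
  rw [ha0, pow_zero] at ha
  omega

end Nat.Prime

theorem frenicle_odd_prime_general (p n x : ℕ) (hp : p.Prime) (hodd : Odd p)
    (hn : 2 ≤ n) : (x : ℤ)^2 - 1 ≠ (p : ℤ)^n := by
  intro h
  have hp2 : p ≠ 2 := by
    rintro rfl
    exact absurd hodd (by decide)
  have hx : x = 2 := hp.eq_two_of_sq_eq_pow_add_one hp2 (by exact_mod_cast sub_eq_iff_eq_add.1 h)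
  subst hx
  have h3 : p ^ n = 3 := by
    norm_num at h
    exact_mod_cast h.symm
  have hn1 : n = 1 := ((Nat.Prime.pow_eq_iff Nat.prime_three).1 h3).2
  omega

theorem frenicle_odd_prime (p n x : ℕ) (hp : p.Prime) (hodd : Odd p)
    (hn : 2 ≤ n) (hx : 0 < x) : (x : ℤ)^2 - 1 ≠ (p : ℤ)^n :=
  frenicle_odd_prime_general p n x hp hodd hn
end

section
/- For every ε > 0 there exists N such that for all integers n ≥ N, the n-th perfect power a_n satisfies |a_n - n^2 + 2 n^{5/3}| ≤ ε n^{5/3}. Equivalently, a_n = n^2 - (2 + o(1)) n^{5/3} as n → ∞. -/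
/-!
Put `x = a n`, so that `n` is the number of perfect powers up to `x`. The squares and the cubes
up to `x` number `⌊√x⌋ + ⌊∛x⌋` and overlap only in sixth powers, and every other perfect power
is `b ^ k` with `k ≥ 5`, hence `b ≤ x ^ (1/5)` and `k ≤ log₂ x`. So `n = √x + ∛x + O(x ^ (1/4))`.
Inverting this relation in the variables `t = x ^ (1/12)`, `u = n ^ (1/6)` gives
`x = u ^ 12 - 2 u ^ 10 + O(u ^ 9) = n ^ 2 - 2 n ^ (5/3) + O(n ^ (3/2))`.
-/

/-- A perfect power: an integer of the form `m^k` with `m ≥ 1` and `k ≥ 2`. -/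
def IsPerfectPower (n : ℕ) : Prop := ∃ m k : ℕ, 1 ≤ m ∧ 2 ≤ k ∧ n = m ^ k

open Finset Filter Asymptotics Real

theorem card_filter_Iic_apply_eq {P : ℕ → Prop} [DecidablePred P] {a : ℕ → ℕ}
    (ha : StrictMonoOn a (Set.Ici 1)) (hP : ∀ N, P N ↔ ∃ m, 1 ≤ m ∧ a m = N) {n : ℕ}
    (hn : 1 ≤ n) : #{N ∈ Iic (a n) | P N} = n := by
  have hfilter : {N ∈ Iic (a n) | P N} = (Icc 1 n).image a := by
    ext N
    simp only [mem_filter, mem_Iic, hP, mem_image, mem_Icc]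
    constructor
    · rintro ⟨hN, m, hm, rfl⟩
      exact ⟨m, ⟨hm, (ha.le_iff_le hm hn).1 hN⟩, rfl⟩
    · rintro ⟨m, ⟨hm, hmn⟩, rfl⟩
      exact ⟨(ha.le_iff_le hm hn).2 hmn, m, hm, rfl⟩
  rw [hfilter, card_image_of_injOn (ha.injOn.mono fun m hm => (mem_Icc.1 hm).1), Nat.card_Icc,
    Nat.add_sub_cancel]

theorem exists_eq_sq_of_pow_three_eq_sq {i j : ℕ} (h : i ^ 3 = j ^ 2) : ∃ b, i = b ^ 2 := by
  obtain ⟨t, rfl⟩ : i ∣ j := (Nat.pow_dvd_pow_iff two_ne_zero).1 ⟨i, by rw [← h]; ring⟩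
  rcases Nat.eq_zero_or_pos i with rfl | hi
  · exact ⟨0, rfl⟩
  · refine ⟨t, Nat.eq_of_mul_eq_mul_left (pow_pos hi 2) ?_⟩
    linear_combination h

theorem IsPerfectPower.eq_sq_or_eq_cube_or_eq_pow {N : ℕ} (h : IsPerfectPower N) :
    (∃ b, 1 ≤ b ∧ N = b ^ 2) ∨ (∃ b, 1 ≤ b ∧ N = b ^ 3) ∨
      ∃ b k, 2 ≤ b ∧ 5 ≤ k ∧ N = b ^ k := by
  obtain ⟨m, k, hm, hk, rfl⟩ := h
  rcases hm.eq_or_lt with rfl | hm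
  · exact .inl ⟨1, le_rfl, by simp⟩
  rcases Nat.even_or_odd' k with ⟨l, rfl | rfl⟩
  · exact .inl ⟨m ^ l, Nat.one_le_pow _ _ (by omega), by ring⟩
  · rcases (show l = 1 ∨ 2 ≤ l by omega) with rfl | hl
    · exact .inr (.inl ⟨m, hm.le, rfl⟩)
    · exact .inr (.inr ⟨m, 2 * l + 1, hm, by omega, rfl⟩)

noncomputable def floorRoot (k x : ℕ) : ℕ := ⌊(x : ℝ) ^ (k : ℝ)⁻¹⌋₊

theorem le_floorRoot_iff {k x b : ℕ} (hk : k ≠ 0) : b ≤ floorRoot k x ↔ b ^ k ≤ x := by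
  rw [floorRoot, Nat.le_floor_iff (by positivity), le_rpow_inv_iff_of_pos (by positivity)
    (by positivity) (by positivity), rpow_natCast]
  exact_mod_cast Iff.rfl

theorem floorRoot_le_rpow (k x : ℕ) : (floorRoot k x : ℝ) ≤ (x : ℝ) ^ (k : ℝ)⁻¹ :=
  Nat.floor_le (by positivity)

theorem rpow_lt_floorRoot_add_one (k x : ℕ) : (x : ℝ) ^ (k : ℝ)⁻¹ < floorRoot k x + 1 :=
  Nat.lt_floor_add_one _

noncomputable def powersUpTo (k x : ℕ) : Finset ℕ := (Icc 1 (floorRoot k x)).image (· ^ k)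

theorem mem_powersUpTo {k x N : ℕ} (hk : k ≠ 0) :
    N ∈ powersUpTo k x ↔ ∃ b, 1 ≤ b ∧ b ^ k ≤ x ∧ N = b ^ k := by
  simp only [powersUpTo, mem_image, mem_Icc, le_floorRoot_iff hk, and_assoc, eq_comm]

theorem card_powersUpTo {k : ℕ} (hk : k ≠ 0) (x : ℕ) : #(powersUpTo k x) = floorRoot k x := by
  rw [powersUpTo, card_image_of_injective _ (Nat.pow_left_injective hk), Nat.card_Icc,
    Nat.add_sub_cancel]

section Counting

open scoped Classical

noncomputable def perfectPowerCount (x : ℕ) : ℕ := #{N ∈ Iic x | IsPerfectPower N}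

theorem powersUpTo_subset_filter_isPerfectPower {k x : ℕ} (hk : 2 ≤ k) :
    powersUpTo k x ⊆ {N ∈ Iic x | IsPerfectPower N} := by
  intro N hN
  obtain ⟨b, hb, hbx, rfl⟩ := (mem_powersUpTo (by omega)).1 hN
  simpa using ⟨hbx, b, k, hb, hk, rfl⟩

theorem floorRoot_two_add_floorRoot_three_le (x : ℕ) :
    floorRoot 2 x + floorRoot 3 x ≤ perfectPowerCount x + floorRoot 6 x := by
  have hinter : powersUpTo 2 x ∩ powersUpTo 3 x ⊆ powersUpTo 6 x := by
    intro N hN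
    rw [mem_inter, mem_powersUpTo two_ne_zero, mem_powersUpTo three_ne_zero] at hN
    obtain ⟨⟨j, -, -, rfl⟩, ⟨i, hi, hix, hij⟩⟩ := hN
    obtain ⟨b, rfl⟩ := exists_eq_sq_of_pow_three_eq_sq hij.symm
    rw [mem_powersUpTo (by norm_num)]
    refine ⟨b, Nat.pos_of_ne_zero fun hb => by simp [hb] at hi, ?_, by rw [hij, ← pow_mul]⟩
    simpa only [← pow_mul] using hix
  have hunion : powersUpTo 2 x ∪ powersUpTo 3 x ⊆ {N ∈ Iic x | IsPerfectPower N} :=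
    union_subset (powersUpTo_subset_filter_isPerfectPower le_rfl)
      (powersUpTo_subset_filter_isPerfectPower (by norm_num))
  have hcard := card_union_add_card_inter (powersUpTo 2 x) (powersUpTo 3 x)
  rw [card_powersUpTo two_ne_zero, card_powersUpTo three_ne_zero] at hcard
  have := (card_le_card hinter).trans_eq (card_powersUpTo (by norm_num) x)
  have := card_le_card hunion
  rw [perfectPowerCount]
  omega

theorem perfectPowerCount_le (x : ℕ) :
    perfectPowerCount x ≤ floorRoot 2 x + floorRoot 3 x + floorRoot 5 x * Nat.log 2 x := by
  set T := (Icc 1 (floorRoot 5 x) ×ˢ Icc 1 (Nat.log 2 x)).image fun q => q.1 ^ q.2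
  have hsub : {N ∈ Iic x | IsPerfectPower N} ⊆ powersUpTo 2 x ∪ powersUpTo 3 x ∪ T := by
    intro N hN
    rw [mem_filter, mem_Iic] at hN
    obtain ⟨hNx, hN⟩ := hN
    simp only [mem_union, mem_powersUpTo two_ne_zero, mem_powersUpTo three_ne_zero]
    rcases hN.eq_sq_or_eq_cube_or_eq_pow with
      ⟨b, hb, rfl⟩ | ⟨b, hb, rfl⟩ | ⟨b, k, hb, hk, rfl⟩
    · exact .inl (.inl ⟨b, hb, hNx, rfl⟩)
    · exact .inl (.inr ⟨b, hb, hNx, rfl⟩)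
    · refine .inr (mem_image.2 ⟨(b, k), mem_product.2 ⟨mem_Icc.2 ⟨by omega, ?_⟩,
        mem_Icc.2 ⟨by omega, ?_⟩⟩, rfl⟩)
      · exact (le_floorRoot_iff (by norm_num)).2 ((Nat.pow_le_pow_right (by omega) hk).trans hNx)
      · exact Nat.le_log_of_pow_le one_lt_two ((Nat.pow_le_pow_left hb k).trans hNx)
  have hT : #T ≤ floorRoot 5 x * Nat.log 2 x :=
    card_image_le.trans (by rw [card_product, Nat.card_Icc, Nat.card_Icc]; simp)
  calc perfectPowerCount x ≤ #(powersUpTo 2 x ∪ powersUpTo 3 x ∪ T) := card_le_card hsub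
    _ ≤ #(powersUpTo 2 x) + #(powersUpTo 3 x) + #T :=
      (card_union_le _ _).trans (Nat.add_le_add_right (card_union_le _ _) _)
    _ ≤ _ := by rw [card_powersUpTo two_ne_zero, card_powersUpTo three_ne_zero]; omega

theorem abs_sqrt_add_cbrt_sub_perfectPowerCount_le (x : ℕ) :
    |(x : ℝ) ^ (2 : ℝ)⁻¹ + (x : ℝ) ^ (3 : ℝ)⁻¹ - perfectPowerCount x| ≤
      (x : ℝ) ^ (6 : ℝ)⁻¹ + (x : ℝ) ^ (5 : ℝ)⁻¹ * logb 2 x + 2 := by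
  have hlo : (floorRoot 2 x + floorRoot 3 x : ℝ) ≤ perfectPowerCount x + floorRoot 6 x := by
    exact_mod_cast floorRoot_two_add_floorRoot_three_le x
  have hhi : (perfectPowerCount x : ℝ) ≤
      floorRoot 2 x + floorRoot 3 x + floorRoot 5 x * (Nat.log 2 x : ℝ) := by
    exact_mod_cast perfectPowerCount_le x
  have hlog : (floorRoot 5 x : ℝ) * Nat.log 2 x ≤ (x : ℝ) ^ (5 : ℝ)⁻¹ * logb 2 x :=
    mul_le_mul (mod_cast floorRoot_le_rpow 5 x) (mod_cast natLog_le_logb x 2) (by positivity)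
      (by positivity)
  have h2 := floorRoot_le_rpow 2 x
  have h3 := floorRoot_le_rpow 3 x
  have h6 := floorRoot_le_rpow 6 x
  have h2' := rpow_lt_floorRoot_add_one 2 x
  have h3' := rpow_lt_floorRoot_add_one 3 x
  have : (0 : ℝ) ≤ floorRoot 5 x * Nat.log 2 x := by positivity
  push_cast at h2 h3 h6 h2' h3'
  rw [abs_le]
  constructor <;> linarith

end Counting

theorem isLittleO_rpow_rpow_atTop {p q : ℝ} (hpq : p < q) :
    (fun y : ℝ => y ^ p) =o[atTop] fun y => y ^ q := by
  refine (isLittleO_iff_tendsto' ?_).2 ?_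
  · filter_upwards [eventually_gt_atTop 0] with y hy h
    exact absurd h (rpow_pos_of_pos hy q).ne'
  · refine (tendsto_rpow_neg_atTop (sub_pos.2 hpq)).congr' ?_
    filter_upwards [eventually_gt_atTop 0] with y hy
    rw [← rpow_sub hy, neg_sub]

theorem isLittleO_rpow_add_rpow_mul_logb_add_two :
    (fun y : ℝ => y ^ (6 : ℝ)⁻¹ + y ^ (5 : ℝ)⁻¹ * logb 2 y + 2) =o[atTop]
      fun y => y ^ (4 : ℝ)⁻¹ := by
  have hlog :
      (fun y : ℝ => y ^ (5 : ℝ)⁻¹ * logb 2 y) =o[atTop] fun y => y ^ (4 : ℝ)⁻¹ := by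
    have := (isLittleO_log_rpow_atTop (r := (20 : ℝ)⁻¹) (by norm_num)).const_mul_left (log 2)⁻¹
    refine ((isBigO_refl (fun y : ℝ => y ^ (5 : ℝ)⁻¹) _).mul_isLittleO this).congr'
      (.of_eq ?_) ?_
    · ext y
      rw [logb, div_eq_inv_mul]
    · filter_upwards [eventually_gt_atTop 0] with y hy
      rw [← rpow_add hy]
      norm_num
  have hconst : (fun _ : ℝ => (2 : ℝ)) =o[atTop] fun y => y ^ (4 : ℝ)⁻¹ :=
    isLittleO_const_left.2 (.inr (tendsto_norm_atTop_atTop.comp (tendsto_rpow_atTop (by norm_num))))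
  exact ((isLittleO_rpow_rpow_atTop (by norm_num)).add hlog).add hconst

theorem eventually_abs_sqrt_add_cbrt_sub_perfectPowerCount_le :
    ∀ᶠ x : ℕ in atTop,
      |(x : ℝ) ^ (2 : ℝ)⁻¹ + (x : ℝ) ^ (3 : ℝ)⁻¹ - perfectPowerCount x| ≤ (x : ℝ) ^ (4 : ℝ)⁻¹ := by
  filter_upwards [tendsto_natCast_atTop_atTop.eventually
    (isLittleO_rpow_add_rpow_mul_logb_add_two.bound one_pos)] with x hx
  refine (abs_sqrt_add_cbrt_sub_perfectPowerCount_le x).trans ((le_abs_self _).trans ?_)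
  simpa [abs_of_nonneg (rpow_nonneg (Nat.cast_nonneg x) _)] using hx

theorem le_and_le_add_one_of_abs_pow_six_add_pow_four_sub_le {t u : ℝ} (ht : 0 ≤ t)
    (hu : 1 ≤ u) (h : |t ^ 6 + t ^ 4 - u ^ 6| ≤ t ^ 3) : t ≤ u ∧ u ≤ t + 1 := by
  obtain ⟨hlo, hhi⟩ := abs_le.1 h
  constructor
  · by_contra! hut
    have : u ^ 6 < t ^ 6 := pow_lt_pow_left₀ hut (by linarith) (by norm_num)
    have : t ^ 3 ≤ t ^ 4 := pow_le_pow_right₀ (by linarith) (by norm_num)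
    linarith
  · by_contra! htu
    have : (t + 1) ^ 6 < u ^ 6 := pow_lt_pow_left₀ htu (by linarith) (by norm_num)
    nlinarith [pow_nonneg ht 2, pow_nonneg ht 5]

theorem abs_pow_twelve_sub_le {t u : ℝ} (ht : 0 ≤ t) (hu : 1 ≤ u)
    (h : |t ^ 6 + t ^ 4 - u ^ 6| ≤ t ^ 3) : |t ^ 12 - u ^ 12 + 2 * u ^ 10| ≤ 36 * u ^ 9 := by
  obtain ⟨htu, hut⟩ := le_and_le_add_one_of_abs_pow_six_add_pow_four_sub_le ht hu h
  have hu0 : 0 ≤ u := ht.trans htu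
  have hquartic : |t ^ 4 - u ^ 4| ≤ 4 * u ^ 3 := by
    have : |t - u| ≤ 1 := abs_le.2 ⟨by linarith, by linarith⟩
    calc |t ^ 4 - u ^ 4| ≤ |t - u| * 4 * max |t| |u| ^ 3 := abs_pow_sub_pow_le t u 4
      _ ≤ 1 * 4 * u ^ 3 := by
        rw [abs_of_nonneg ht, abs_of_nonneg hu0, max_eq_right htu]
        gcongr
      _ = 4 * u ^ 3 := by ring
  set r := t ^ 6 - (u ^ 6 - u ^ 4)
  have hr : |r| ≤ 5 * u ^ 3 :=
    calc |r| = |(t ^ 6 + t ^ 4 - u ^ 6) - (t ^ 4 - u ^ 4)| := by congr 1; ring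
      _ ≤ t ^ 3 + 4 * u ^ 3 := (abs_sub _ _).trans (add_le_add h hquartic)
      _ ≤ 5 * u ^ 3 := by linarith [pow_le_pow_left₀ ht htu 3]
  have hu6 : |u ^ 6 - u ^ 4| ≤ u ^ 6 := by
    have : u ^ 4 ≤ u ^ 6 := pow_le_pow_right₀ hu (by norm_num)
    rw [abs_of_nonneg (by linarith)]
    linarith [pow_nonneg hu0 4]
  have : u ^ 6 ≤ u ^ 9 := pow_le_pow_right₀ hu (by norm_num)
  have : u ^ 8 ≤ u ^ 9 := pow_le_pow_right₀ hu (by norm_num)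
  calc |t ^ 12 - u ^ 12 + 2 * u ^ 10| = |u ^ 8 + 2 * r * (u ^ 6 - u ^ 4) + r ^ 2| := by
        congr 1; ring
    _ ≤ u ^ 8 + 2 * |r| * |u ^ 6 - u ^ 4| + |r| ^ 2 := by
        refine (abs_add_three _ _ _).trans_eq ?_
        rw [abs_mul, abs_mul, abs_two, abs_sq, sq_abs, abs_of_nonneg (by positivity)]
    _ ≤ u ^ 8 + 2 * (5 * u ^ 3) * u ^ 6 + (5 * u ^ 3) ^ 2 := by gcongr
    _ ≤ 36 * u ^ 9 := by nlinarith

theorem abs_sub_sq_add_two_rpow_le {x n : ℝ} (hx : 0 ≤ x) (hn : 1 ≤ n)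
    (h : |x ^ (2 : ℝ)⁻¹ + x ^ (3 : ℝ)⁻¹ - n| ≤ x ^ (4 : ℝ)⁻¹) :
    |x - n ^ 2 + 2 * n ^ ((5 : ℝ) / 3)| ≤ 36 * n ^ ((3 : ℝ) / 2) := by
  set t := x ^ (12 : ℝ)⁻¹
  set u := n ^ (6 : ℝ)⁻¹
  have ht6 : t ^ 6 = x ^ (2 : ℝ)⁻¹ := by rw [← rpow_mul_natCast hx]; norm_num
  have ht4 : t ^ 4 = x ^ (3 : ℝ)⁻¹ := by rw [← rpow_mul_natCast hx]; norm_num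
  have ht3 : t ^ 3 = x ^ (4 : ℝ)⁻¹ := by rw [← rpow_mul_natCast hx]; norm_num
  have ht12 : t ^ 12 = x := by rw [← rpow_mul_natCast hx]; norm_num
  have hu6 : u ^ 6 = n := by rw [← rpow_mul_natCast (by linarith)]; norm_num
  have hu9 : u ^ 9 = n ^ ((3 : ℝ) / 2) := by rw [← rpow_mul_natCast (by linarith)]; norm_num
  have hu10 : u ^ 10 = n ^ ((5 : ℝ) / 3) := by rw [← rpow_mul_natCast (by linarith)]; norm_num
  have hu12 : u ^ 12 = n ^ 2 := by rw [← rpow_mul_natCast (by linarith)]; norm_num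
  have hu1 : 1 ≤ u := one_le_rpow hn (by norm_num)
  have := abs_pow_twelve_sub_le (rpow_nonneg hx _) hu1 (by rwa [ht6, ht4, ht3, hu6])
  rwa [ht12, hu12, hu10, hu9] at this

theorem nth_perfect_power_asymptotic (a : ℕ → ℕ)
    (hmono : ∀ m n : ℕ, 1 ≤ m → m < n → a m < a n)
    (hrange : ∀ N : ℕ, IsPerfectPower N ↔ ∃ n : ℕ, 1 ≤ n ∧ a n = N) :
    ∀ ε : ℝ, 0 < ε → ∃ N : ℕ, ∀ n : ℕ, N ≤ n →
      |(a n : ℝ) - (n : ℝ)^2 + 2 * (n : ℝ)^((5 : ℝ)/3)| ≤ ε * (n : ℝ)^((5 : ℝ)/3) := by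
  intro ε hε
  have hcount : ∀ n, 1 ≤ n → perfectPowerCount (a n) = n := fun n hn => by
    classical exact card_filter_Iic_apply_eq (fun m hm _ _ hmn => hmono m _ hm hmn) hrange hn
  have ha : Tendsto a atTop atTop := (tendsto_add_atTop_iff_nat 1).1
    (StrictMono.tendsto_atTop fun m n hmn => hmono _ _ (by omega) (by omega))
  have hu : Tendsto (fun n : ℕ => (n : ℝ) ^ (6 : ℝ)⁻¹) atTop atTop :=
    (tendsto_rpow_atTop (by norm_num)).comp tendsto_natCast_atTop_atTop
  obtain ⟨N, hN⟩ := eventually_atTop.1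
    ((ha.eventually eventually_abs_sqrt_add_cbrt_sub_perfectPowerCount_le).and
      ((eventually_ge_atTop 1).and (hu.eventually_ge_atTop (36 / ε))))
  refine ⟨N, fun n hn => ?_⟩
  obtain ⟨hx, hn1, hun⟩ := hN n hn
  rw [hcount n hn1] at hx
  have hn0 : (0 : ℝ) < n := by exact_mod_cast hn1
  calc _ ≤ 36 * (n : ℝ) ^ ((3 : ℝ) / 2) :=
        abs_sub_sq_add_two_rpow_le (Nat.cast_nonneg _) (by exact_mod_cast hn1) hx
    _ ≤ ε * (n : ℝ) ^ (6 : ℝ)⁻¹ * (n : ℝ) ^ ((3 : ℝ) / 2) := by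
        gcongr
        exact (div_le_iff₀' hε).1 hun
    _ = ε * (n : ℝ) ^ ((5 : ℝ) / 3) := by
        rw [mul_assoc, ← rpow_add hn0]
        norm_num
end

section
/- The sum over all perfect powers m ≥ 4 (counted once each, without repetition) of 1/(m - 1) equals 1. -/
open Filter Topology

lemma IsPerfectPower.pow {b k : ℕ} (hb : b ≠ 0) (hk : 2 ≤ k) : IsPerfectPower (b ^ k) :=
  ⟨b, k, Nat.one_le_iff_ne_zero.mpr hb, hk, rfl⟩

lemma dvd_and_eq_pow_of_pow_eq_pow {b s a k : ℕ} (hb : b ≠ 0) (hbp : ¬IsPerfectPower b)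
    (hk : k ≠ 0) (h : b ^ s = a ^ k) : k ∣ s ∧ a = b ^ (s / k) := by
  obtain ⟨c, hbc, hac⟩ := Nat.exists_eq_pow_of_pow_eq_pow (Or.inr hk) h
  have hg : s.gcd k ≠ 0 := Nat.gcd_ne_zero_right hk
  have hpos : 0 < k / s.gcd k :=
    Nat.div_pos (Nat.gcd_le_right s (Nat.pos_of_ne_zero hk)) (Nat.pos_of_ne_zero hg)
  have hc : c ≠ 0 := by rintro rfl; exact hb (by rw [hbc, zero_pow hpos.ne'])
  have hone : k / s.gcd k = 1 := by
    by_contra hne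
    exact hbp (hbc ▸ IsPerfectPower.pow hc (by omega))
  have hgk : s.gcd k = k := Nat.eq_of_dvd_of_div_eq_one (Nat.gcd_dvd_right s k) hone
  rw [hone, pow_one] at hbc
  subst hbc
  exact ⟨hgk ▸ Nat.gcd_dvd_left s k, hgk ▸ hac⟩

lemma exists_eq_pow_of_not_isPerfectPower {n : ℕ} (hn : 2 ≤ n) :
    ∃ b r, (2 ≤ b ∧ ¬IsPerfectPower b) ∧ 1 ≤ r ∧ n = b ^ r := by
  induction n using Nat.strong_induction_on with
  | _ n ih =>
    by_cases hn' : IsPerfectPower n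
    · obtain ⟨a, k, ha, hk, rfl⟩ := hn'
      have ha2 : 2 ≤ a := by
        by_contra! ha2
        obtain rfl : a = 1 := by omega
        simp at hn
      obtain ⟨b, r, hb, hr, rfl⟩ := ih a (lt_self_pow₀ ha2 hk) ha2
      exact ⟨b, r * k, hb, Nat.mul_pos hr (by omega), (pow_mul b r k).symm⟩
    · exact ⟨n, 1, ⟨hn, hn'⟩, le_rfl, (pow_one n).symm⟩

abbrev NonPerfectPower := {b : ℕ // 2 ≤ b ∧ ¬IsPerfectPower b}

namespace NonPerfectPower

lemma pow_eq_pow_iff {b₁ b₂ : NonPerfectPower} {r₁ r₂ : ℕ} (hr₁ : 0 < r₁) (hr₂ : 0 < r₂) :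
    (b₁ : ℕ) ^ r₁ = (b₂ : ℕ) ^ r₂ ↔ b₁ = b₂ ∧ r₁ = r₂ := by
  refine ⟨fun h ↦ ?_, fun ⟨hb, hr⟩ ↦ hb ▸ hr ▸ rfl⟩
  have hb₁ : (b₁ : ℕ) ≠ 0 := by have := b₁.2.1; omega
  have hb₂ : (b₂ : ℕ) ≠ 0 := by have := b₂.2.1; omega
  obtain ⟨hr₂₁, hb⟩ := dvd_and_eq_pow_of_pow_eq_pow hb₁ b₁.2.2 hr₂.ne' h
  have hr : r₁ = r₂ :=
    Nat.dvd_antisymm (dvd_and_eq_pow_of_pow_eq_pow hb₂ b₂.2.2 hr₁.ne' h.symm).1 hr₂₁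
  rw [hr, Nat.div_self hr₂, pow_one] at hb
  exact ⟨Subtype.ext hb.symm, hr⟩

noncomputable def powEquiv : NonPerfectPower × {r : ℕ // 1 ≤ r} ≃ {n : ℕ // 2 ≤ n} :=
  Equiv.ofBijective (fun p ↦ ⟨(p.1 : ℕ) ^ (p.2 : ℕ),
      p.1.2.1.trans (Nat.le_self_pow (Nat.pos_iff_ne_zero.mp p.2.2) _)⟩) <| by
    refine ⟨fun ⟨b₁, r₁, hr₁⟩ ⟨b₂, r₂, hr₂⟩ h ↦ ?_, fun ⟨n, hn⟩ ↦ ?_⟩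
    · obtain ⟨rfl, rfl⟩ := (pow_eq_pow_iff hr₁ hr₂).mp (congrArg Subtype.val h)
      rfl
    obtain ⟨b, r, hb, hr, rfl⟩ := exists_eq_pow_of_not_isPerfectPower hn
    exact ⟨(⟨b, hb⟩, ⟨r, hr⟩), rfl⟩

@[simp]
lemma coe_powEquiv (p : NonPerfectPower × {r : ℕ // 1 ≤ r}) :
    (powEquiv p : ℕ) = (p.1 : ℕ) ^ (p.2 : ℕ) :=
  rfl

noncomputable def powEquivPerfectPower :
    NonPerfectPower × {k : ℕ // 2 ≤ k} ≃ {m : ℕ // 4 ≤ m ∧ IsPerfectPower m} :=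
  Equiv.ofBijective (fun p ↦ ⟨(p.1 : ℕ) ^ (p.2 : ℕ),
      (Nat.pow_le_pow_left p.1.2.1 2).trans
        (Nat.pow_le_pow_right (by have := p.1.2.1; omega) p.2.2),
      IsPerfectPower.pow (by have := p.1.2.1; omega) p.2.2⟩) <| by
    refine ⟨fun ⟨b₁, k₁, hk₁⟩ ⟨b₂, k₂, hk₂⟩ h ↦ ?_, fun ⟨m, hm, hmp⟩ ↦ ?_⟩
    · obtain ⟨rfl, rfl⟩ := (pow_eq_pow_iff (zero_lt_two.trans_le hk₁)
        (zero_lt_two.trans_le hk₂)).mp (congrArg Subtype.val h)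
      rfl
    · obtain ⟨b, r, hb, hr, rfl⟩ := exists_eq_pow_of_not_isPerfectPower (by omega : 2 ≤ m)
      have hr2 : 2 ≤ r := by
        by_contra! hr2
        obtain rfl : r = 1 := by omega
        exact hb.2 (by simpa using hmp)
      exact ⟨(⟨b, hb⟩, ⟨r, hr2⟩), rfl⟩

@[simp]
lemma coe_powEquivPerfectPower (p : NonPerfectPower × {k : ℕ // 2 ≤ k}) :
    (powEquivPerfectPower p : ℕ) = (p.1 : ℕ) ^ (p.2 : ℕ) :=
  rfl

end NonPerfectPower

def natAddEquiv (c : ℕ) : ℕ ≃ {k : ℕ // c ≤ k} where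
  toFun n := ⟨n + c, Nat.le_add_left c n⟩
  invFun k := k - c
  left_inv n := Nat.add_sub_cancel n c
  right_inv k := Subtype.ext (Nat.sub_add_cancel k.2)

lemma hasSum_geometric_ge_of_norm_lt_one {K : Type*} [NormedDivisionRing K] {ξ : K}
    (h : ‖ξ‖ < 1) (c : ℕ) :
    HasSum (fun k : {k : ℕ // c ≤ k} ↦ ξ ^ (k : ℕ)) (ξ ^ c * (1 - ξ)⁻¹) :=
  (natAddEquiv c).hasSum_iff.mp <|
    ((hasSum_geometric_of_norm_lt_one h).mul_left (ξ ^ c)).congr_fun fun n ↦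
      (pow_add ξ n c).trans (pow_mul_comm ξ n c)

lemma Antitone.hasSum_sub_succ {f : ℕ → ℝ} (hf : Antitone f) (hf0 : Tendsto f atTop (𝓝 0)) :
    HasSum (fun n ↦ f n - f (n + 1)) (f 0) := by
  rw [hasSum_iff_tendsto_nat_of_nonneg (fun n ↦ sub_nonneg.mpr (hf n.le_succ))]
  simpa only [Finset.sum_range_sub', sub_zero] using tendsto_const_nhds (x := f 0) |>.sub hf0

lemma HasSum.prod_of_nonneg {α β : Type*} {f : α × β → ℝ} {g : α → ℝ} {s : ℝ} (hf : 0 ≤ f)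
    (hfg : ∀ a, HasSum (fun b ↦ f (a, b)) (g a)) (hg : HasSum g s) : HasSum f s := by
  have hsum : Summable f :=
    (summable_prod_of_nonneg hf).mpr
      ⟨fun a ↦ (hfg a).summable, hg.summable.congr fun a ↦ (hfg a).tsum_eq.symm⟩
  exact (hsum.hasSum.prod_fiberwise hfg).unique hg ▸ hsum.hasSum

lemma norm_inv_lt_one_of_one_lt {a : ℝ} (ha : 1 < a) : ‖a⁻¹‖ < 1 := by
  rw [norm_inv, Real.norm_of_nonneg (by linarith)]
  exact inv_lt_one_of_one_lt₀ ha

lemma hasSum_inv_pow_ge_one {a : ℝ} (ha : 1 < a) :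
    HasSum (fun k : {k : ℕ // 1 ≤ k} ↦ a⁻¹ ^ (k : ℕ)) (a - 1)⁻¹ := by
  have h := hasSum_geometric_ge_of_norm_lt_one (norm_inv_lt_one_of_one_lt ha) 1
  have ha₀ : a ≠ 0 := by positivity
  rwa [show a⁻¹ ^ 1 * (1 - a⁻¹)⁻¹ = (a - 1)⁻¹ by field_simp] at h

lemma hasSum_inv_pow_ge_two {a : ℝ} (ha : 1 < a) :
    HasSum (fun k : {k : ℕ // 2 ≤ k} ↦ a⁻¹ ^ (k : ℕ)) (a * (a - 1))⁻¹ := by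
  have h := hasSum_geometric_ge_of_norm_lt_one (norm_inv_lt_one_of_one_lt ha) 2
  have ha₀ : a ≠ 0 := by positivity
  rwa [show a⁻¹ ^ 2 * (1 - a⁻¹)⁻¹ = (a * (a - 1))⁻¹ by field_simp] at h

lemma hasSum_inv_mul_sub_one :
    HasSum (fun a : {a : ℕ // 2 ≤ a} ↦ (((a : ℕ) : ℝ) * ((a : ℕ) - 1))⁻¹) 1 := by
  have hanti : Antitone fun n : ℕ ↦ 1 / ((n : ℝ) + 1) := fun m n hmn ↦
    one_div_le_one_div_of_le (by positivity) (by gcongr)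
  have h := hanti.hasSum_sub_succ tendsto_one_div_add_atTop_nhds_zero_nat
  refine (natAddEquiv 2).hasSum_iff.mp ?_
  simp only [Nat.cast_zero, zero_add, div_one] at h
  refine h.congr_fun fun n ↦ ?_
  have hn : (n : ℝ) + 1 ≠ 0 := by positivity
  simp only [Function.comp_apply, natAddEquiv, Equiv.coe_fn_mk]
  push_cast
  rw [show (n : ℝ) + 2 - 1 = n + 1 by ring]
  field_simp
  ring

lemma hasSum_inv_pow_ge_two_ge_two :
    HasSum (fun p : {a : ℕ // 2 ≤ a} × {k : ℕ // 2 ≤ k} ↦ ((p.1 : ℕ) : ℝ)⁻¹ ^ (p.2 : ℕ)) 1 := by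
  refine HasSum.prod_of_nonneg (fun _ ↦ by positivity) (fun a ↦ ?_) hasSum_inv_mul_sub_one
  exact hasSum_inv_pow_ge_two (Nat.one_lt_cast.mpr a.2)

lemma hasSum_perfectPower_inv_pow :
    HasSum (fun p : {m : ℕ // 4 ≤ m ∧ IsPerfectPower m} × {j : ℕ // 1 ≤ j} ↦
      ((p.1 : ℕ) : ℝ)⁻¹ ^ (p.2 : ℕ)) 1 := by
  have hbase : HasSum (fun t : NonPerfectPower × {r : ℕ // 1 ≤ r} × {k : ℕ // 2 ≤ k} ↦
      ((t.1 : ℕ) : ℝ)⁻¹ ^ ((t.2.1 : ℕ) * t.2.2)) 1 := by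
    refine (((Equiv.prodAssoc _ _ _).symm.trans
      (NonPerfectPower.powEquiv.prodCongr (Equiv.refl _))).hasSum_iff.mpr
        hasSum_inv_pow_ge_two_ge_two).congr_fun fun t ↦ ?_
    simp [pow_mul]
  refine (((Equiv.prodCongr (Equiv.refl _) (Equiv.prodComm _ _)).trans
    ((Equiv.prodAssoc _ _ _).symm.trans
      (NonPerfectPower.powEquivPerfectPower.prodCongr (Equiv.refl _)))).hasSum_iff.mp
        (hbase.congr_fun fun t ↦ ?_))
  simp [pow_mul']

theorem goldbach_euler_sum :
    ∑' m : {m : ℕ // 4 ≤ m ∧ IsPerfectPower m}, (1 : ℝ) / ((m : ℕ) - 1 : ℝ) = 1 := by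
  refine (hasSum_perfectPower_inv_pow.prod_fiberwise fun m ↦ ?_).tsum_eq
  rw [one_div]
  exact hasSum_inv_pow_ge_one (Nat.one_lt_cast.mpr (by have := m.2.1; omega))
end

section
/- The double sum ∑_{n=0}^∞ ∑_{m=1}^∞ 1/(4n+3)^{2m+1} equals π/8 − (1/2)·log 2. -/
/-!
Summing the inner geometric series gives `1 / ((c - 1) c (c + 1))` with `c = 4n + 3`, and, by
partial fractions, twice this term is
`(1/(4n+1) - 1/(4n+3)) - (1/(4n+1) - 1/(4n+2) + 1/(4n+3) - 1/(4n+4))`,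
two consecutive terms of Leibniz's series for `π / 4` minus four consecutive terms of the
alternating harmonic series. The latter sums to `log 2`, because its partial sums of even length
are `H_{2M} - H_M` and `H_n - log n` converges.
-/

open Filter Finset Real
open scoped Topology

theorem Finset.sum_range_two_mul {M : Type*} [AddCommMonoid M] (f : ℕ → M) (N : ℕ) :
    ∑ i ∈ range (2 * N), f i = ∑ n ∈ range N, (f (2 * n) + f (2 * n + 1)) := by
  induction N with
  | zero => simp
  | succ N ih =>
    rw [mul_add, mul_one, sum_range_succ, sum_range_succ, sum_range_succ, ih, add_assoc]

lemma tsum_one_div_pow_odd_of_one_lt_abs {c : ℝ} (hc : 1 < |c|) :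
    ∑' m : ℕ, 1 / c ^ (2 * (m + 1) + 1) = 1 / ((c - 1) * c * (c + 1)) := by
  have hc0 : c ≠ 0 := by rintro rfl; norm_num at hc
  have hsq : 1 < c ^ 2 := (one_lt_sq_iff_one_lt_abs c).mpr hc
  have hgeom (m : ℕ) : 1 / c ^ (2 * (m + 1) + 1) = 1 / c ^ 3 * (1 / c ^ 2) ^ m := by
    rw [div_pow, one_pow, ← pow_mul, div_mul_div_comm, one_mul, ← pow_add]
    ring_nf
  rw [tsum_congr hgeom, tsum_mul_left,
    tsum_geometric_of_lt_one (by positivity) ((div_lt_one (by positivity)).mpr hsq)]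
  have : (c - 1) * (c + 1) ≠ 0 := by nlinarith
  field_simp
  ring

lemma sum_range_one_div_odd_sub_one_div_even (M : ℕ) :
    ∑ k ∈ range M, (1 / (2 * k + 1) - 1 / (2 * k + 2) : ℝ) = harmonic (2 * M) - harmonic M := by
  simp only [harmonic, Rat.cast_sum, sum_range_two_mul, ← sum_sub_distrib]
  refine sum_congr rfl fun k _ ↦ ?_
  push_cast
  field_simp
  ring

lemma tendsto_sum_range_one_div_odd_sub_one_div_even :
    Tendsto (fun M : ℕ ↦ ∑ k ∈ range M, (1 / (2 * k + 1) - 1 / (2 * k + 2) : ℝ)) atTop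
      (𝓝 (log 2)) := by
  have h := ((tendsto_harmonic_sub_log.comp (tendsto_id.const_mul_atTop' two_pos)).sub
    tendsto_harmonic_sub_log).add_const (log 2)
  rw [sub_self, zero_add] at h
  refine h.congr' ?_
  filter_upwards [eventually_ne_atTop 0] with M hM
  rw [sum_range_one_div_odd_sub_one_div_even, Function.comp_apply, id, Nat.cast_mul, Nat.cast_ofNat,
    log_mul two_ne_zero (Nat.cast_ne_zero.mpr hM)]
  ring

lemma tendsto_sum_range_one_div_four_mul_add_one_sub_one_div_four_mul_add_three :
    Tendsto (fun N : ℕ ↦ ∑ n ∈ range N, (1 / (4 * n + 1) - 1 / (4 * n + 3) : ℝ)) atTop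
      (𝓝 (π / 4)) := by
  refine (tendsto_sum_pi_div_four.comp (tendsto_id.const_mul_atTop' two_pos)).congr fun N ↦ ?_
  simp only [Function.comp_apply, sum_range_two_mul]
  refine sum_congr rfl fun n _ ↦ ?_
  simp only [pow_succ, pow_mul]
  push_cast
  ring

lemma sum_range_one_div_four_mul_add_two_mul_add_three_mul_add_four (N : ℕ) :
    ∑ n ∈ range N, (1 / ((4 * n + 2) * (4 * n + 3) * (4 * n + 4)) : ℝ) =
      (∑ n ∈ range N, (1 / (4 * n + 1) - 1 / (4 * n + 3) : ℝ) -
        ∑ k ∈ range (2 * N), (1 / (2 * k + 1) - 1 / (2 * k + 2) : ℝ)) / 2 := by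
  rw [sum_range_two_mul, ← sum_sub_distrib, sum_div]
  refine sum_congr rfl fun n _ ↦ ?_
  push_cast
  field_simp
  ring

theorem van_der_poorten_double_sum :
    ∑' n : ℕ, ∑' m : ℕ, (1 : ℝ) / ((4 * n + 3 : ℝ) ^ (2 * (m + 1) + 1)) =
      Real.pi / 8 - (1 / 2) * Real.log 2 := by
  have hinner (n : ℕ) : ∑' m : ℕ, (1 : ℝ) / ((4 * n + 3 : ℝ) ^ (2 * (m + 1) + 1)) =
      1 / ((4 * n + 2) * (4 * n + 3) * (4 * n + 4)) := by
    have hc : 1 < |(4 * n + 3 : ℝ)| := lt_abs.mpr (.inl (by linarith [n.cast_nonneg' (α := ℝ)]))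
    rw [tsum_one_div_pow_odd_of_one_lt_abs hc]
    ring
  have hpartial : Tendsto (fun N : ℕ ↦ ∑ n ∈ range N,
      (1 / ((4 * n + 2) * (4 * n + 3) * (4 * n + 4)) : ℝ)) atTop (𝓝 (π / 8 - 1 / 2 * log 2)) := by
    simp only [sum_range_one_div_four_mul_add_two_mul_add_three_mul_add_four]
    convert (tendsto_sum_range_one_div_four_mul_add_one_sub_one_div_four_mul_add_three.sub
      (tendsto_sum_range_one_div_odd_sub_one_div_even.comp
        (tendsto_id.const_mul_atTop' two_pos))).div_const 2 using 2
    · rfl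
    · ring
  rw [tsum_congr hinner]
  exact ((hasSum_iff_tendsto_nat_of_nonneg (fun n ↦ by positivity) _).mpr hpartial).tsum_eq
end

section
/- Assume the abc conjecture: for every ε > 0 there is κ(ε) > 0 such that for all coprime positive integers a, b, c with a + b = c, one has c < κ(ε)·rad(abc)^{1+ε}. Then for every ε > 0 there is κ'(ε) > 0 such that for all positive integers a, b, x ≥ 2, y ≥ 2 with a^x ≠ b^y, |a^x - b^y| ≥ κ'(ε)·max{a^x, b^y}^{1 - 1/x - 1/y - ε}. -/
/-!
Write `M = max(a^x, b^y)`, say `M = a^x`. The abc inequality, applied to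
`b^y + (a^x - b^y) = a^x` after dividing out the gcd of the summands, bounds `M` by
`κ (rad(a^x) rad(b^y) |a^x - b^y|)^(1+ε)`. Since `rad(a^x) ≤ a = M^(1/x)` and
`rad(b^y) ≤ b ≤ M^(1/y)`, taking `(1+ε)`-th roots and using `1 - ε ≤ 1/(1+ε)` gives
`|a^x - b^y| ≥ κ^(-1/(1+ε)) M^(1 - 1/x - 1/y - ε)`.
-/

/-- The radical (squarefree kernel) of a natural number. -/
def rad (n : ℕ) : ℕ := ∏ p ∈ n.primeFactors, p

open UniqueFactorizationMonoid

lemma rad_eq_radical (n : ℕ) : rad n = radical n :=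
  Nat.radical_eq_prod_primeFactors.symm

lemma Nat.radical_mul_mul_le {A B C u v : ℕ} (hAu : A ∣ u) (hCv : C ∣ v) (hu : u ≠ 0)
    (hv : v ≠ 0) (hB : B ≠ 0) : radical (A * B * C) ≤ radical u * B * radical v := by
  refine Nat.le_of_dvd (Nat.pos_of_ne_zero (by simp [hB])) ?_
  exact (radical_mul_dvd.trans (mul_dvd_mul_right radical_mul_dvd _)).trans <|
    mul_dvd_mul (mul_dvd_mul (radical_dvd_radical hAu hu) radical_dvd_self)
      (radical_dvd_radical hCv hv)

lemma Nat.radical_pow_le_rpow_one_div {b k N : ℕ} (hb : b ≠ 0) (hk : k ≠ 0)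
    (hN : b ^ k ≤ N) :
    ((radical (b ^ k) : ℕ) : ℝ) ≤ (N : ℝ) ^ (1 / (k : ℝ)) := by
  calc ((radical (b ^ k) : ℕ) : ℝ) = (radical b : ℕ) := by rw [radical_pow _ hk]
    _ ≤ b := by exact_mod_cast Nat.radical_le_self_iff.mpr hb
    _ = ((b : ℝ) ^ k) ^ (1 / (k : ℝ)) := by
      rw [one_div, Real.pow_rpow_inv_natCast (Nat.cast_nonneg b) hk]
    _ ≤ (N : ℝ) ^ (1 / (k : ℝ)) := by gcongr; exact_mod_cast hN

lemma Real.inv_rpow_mul_rpow_le_of_lt_mul_rpow {M κ ε s δ : ℝ} (hM : 1 ≤ M) (hκ : 0 < κ)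
    (hε : 0 ≤ ε) (hδ : 0 ≤ δ) (h : M < κ * (M ^ s * δ) ^ (1 + ε)) :
    (κ ^ (1 / (1 + ε)))⁻¹ * M ^ (1 - s - ε) ≤ δ := by
  set t := 1 / (1 + ε)
  have ht : 1 - ε ≤ t := by rw [le_div_iff₀ (by positivity)]; nlinarith
  have hroot : M ^ t < κ ^ t * (M ^ s * δ) := by
    calc M ^ t < (κ * (M ^ s * δ) ^ (1 + ε)) ^ t := by gcongr
      _ = κ ^ t * (M ^ s * δ) := by
        rw [Real.mul_rpow hκ.le (by positivity), ← Real.rpow_mul (by positivity),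
          mul_one_div_cancel (by positivity), Real.rpow_one]
  calc (κ ^ t)⁻¹ * M ^ (1 - s - ε) ≤ (κ ^ t)⁻¹ * (M ^ t / M ^ s) := by
        rw [← Real.rpow_sub (by positivity)]
        exact mul_le_mul_of_nonneg_left (Real.rpow_le_rpow_of_exponent_le hM (by linarith))
          (by positivity)
    _ ≤ (κ ^ t)⁻¹ * (κ ^ t * (M ^ s * δ) / M ^ s) := by gcongr
    _ = δ := by field_simp

def AbcInequality (ε κ : ℝ) : Prop :=
  ∀ a b c : ℕ, 0 < a → 0 < b → 0 < c → Nat.Coprime a b → a + b = c →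
    (c : ℝ) < κ * (rad (a * b * c) : ℝ) ^ (1 + ε)

namespace AbcInequality

variable {ε κ : ℝ}

/-- The common factor `g = gcd(u, w)` is harmless since `g ≤ g^(1+ε)`. -/
theorem lt_of_add_eq (h : AbcInequality ε κ) (hε : 0 ≤ ε) (hκ : 0 ≤ κ) {u w v : ℕ}
    (hu : 0 < u) (hw : 0 < w) (huwv : u + w = v) :
    (v : ℝ) < κ * ((radical u * w * radical v : ℕ) : ℝ) ^ (1 + ε) := by
  obtain ⟨g, A, B, hg, hAB, rfl, rfl⟩ := Nat.exists_coprime' (Nat.gcd_pos_of_pos_left w hu)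
  subst huwv
  have hA : 0 < A := Nat.pos_of_mul_pos_right hu
  have hB : 0 < B := Nat.pos_of_mul_pos_right hw
  have habc := h A B (A + B) hA hB (by omega) hAB rfl
  set R := radical (A * g) * B * radical (A * g + B * g)
  have hrad : radical (A * B * (A + B)) ≤ R :=
    Nat.radical_mul_mul_le (dvd_mul_right A g) ⟨g, by ring⟩ (by positivity) (by positivity)
      hB.ne'
  rw [rad_eq_radical] at habc
  have hg1 : (1 : ℝ) ≤ g := by exact_mod_cast hg
  calc ((A * g + B * g : ℕ) : ℝ) = g * (A + B : ℕ) := by push_cast; ring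
    _ < g * (κ * (R : ℝ) ^ (1 + ε)) := by
      gcongr
      exact habc.trans_le (by gcongr)
    _ ≤ κ * ((g : ℝ) ^ (1 + ε) * (R : ℝ) ^ (1 + ε)) := by
      rw [mul_left_comm]
      gcongr
      exact Real.self_le_rpow_of_one_le hg1 (by linarith)
    _ = κ * ((radical (A * g) * (B * g) * radical (A * g + B * g) : ℕ) : ℝ) ^ (1 + ε) := by
      rw [← Real.mul_rpow (by positivity) (by positivity)]
      push_cast [R]
      congr 2
      ring

theorem rpow_le_abs_sub_of_lt (h : AbcInequality ε κ) (hε : 0 ≤ ε) (hκ : 0 < κ)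
    {a b x y : ℕ} (ha : a ≠ 0) (hb : b ≠ 0) (hx : x ≠ 0) (hy : y ≠ 0)
    (hlt : b ^ y < a ^ x) :
    (κ ^ (1 / (1 + ε)))⁻¹ *
        max ((a : ℝ) ^ x) ((b : ℝ) ^ y) ^ (1 - 1 / (x : ℝ) - 1 / (y : ℝ) - ε) ≤
      |(a : ℝ) ^ x - (b : ℝ) ^ y| := by
  have hltR : (b : ℝ) ^ y < (a : ℝ) ^ x := by exact_mod_cast hlt
  have hmax : max ((a : ℝ) ^ x) ((b : ℝ) ^ y) = (a ^ x : ℕ) := by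
    push_cast; exact max_eq_left hltR.le
  have habs : |(a : ℝ) ^ x - (b : ℝ) ^ y| = (a ^ x - b ^ y : ℕ) := by
    rw [Nat.cast_sub hlt.le, abs_of_pos (by linarith)]; push_cast; rfl
  rw [hmax, habs, show (1 : ℝ) - 1 / x - 1 / y - ε = 1 - (1 / y + 1 / x) - ε by ring]
  have hM : (1 : ℝ) ≤ (a ^ x : ℕ) := by exact_mod_cast Nat.one_le_pow _ _ (by omega)
  refine Real.inv_rpow_mul_rpow_le_of_lt_mul_rpow hM hκ hε (Nat.cast_nonneg _) ?_
  calc ((a ^ x : ℕ) : ℝ)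
      < κ * ((radical (b ^ y) * (a ^ x - b ^ y) * radical (a ^ x) : ℕ) : ℝ) ^ (1 + ε) :=
        h.lt_of_add_eq hε hκ.le (by positivity) (Nat.sub_pos_of_lt hlt) (by omega)
    _ ≤ κ * (((a ^ x : ℕ) : ℝ) ^ (1 / (y : ℝ) + 1 / (x : ℝ)) *
          (a ^ x - b ^ y : ℕ)) ^ (1 + ε) := by
      gcongr
      rw [Real.rpow_add (by positivity), Nat.cast_mul, Nat.cast_mul, mul_right_comm]
      gcongr
      · exact Nat.radical_pow_le_rpow_one_div hb hy hlt.le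
      · exact Nat.radical_pow_le_rpow_one_div ha hx le_rfl

end AbcInequality

theorem abc_implies_quantitative_pillai
    (habc : ∀ ε : ℝ, 0 < ε → ∃ κ : ℝ, 0 < κ ∧ ∀ a b c : ℕ,
      0 < a → 0 < b → 0 < c → Nat.Coprime a b → a + b = c →
      (c : ℝ) < κ * (rad (a * b * c) : ℝ) ^ (1 + ε)) :
    ∀ ε : ℝ, 0 < ε → ∃ κ' : ℝ, 0 < κ' ∧ ∀ a b x y : ℕ,
      0 < a → 0 < b → 2 ≤ x → 2 ≤ y → a ^ x ≠ b ^ y →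
      κ' * (max ((a : ℝ) ^ x) ((b : ℝ) ^ y)) ^ (1 - 1 / (x : ℝ) - 1 / (y : ℝ) - ε) ≤
        |(a : ℝ) ^ x - (b : ℝ) ^ y| := by
  intro ε hε
  obtain ⟨κ, hκ, habc⟩ : ∃ κ, 0 < κ ∧ AbcInequality ε κ := habc ε hε
  refine ⟨(κ ^ (1 / (1 + ε)))⁻¹, by positivity, fun a b x y ha hb hx hy hne => ?_⟩
  rcases Nat.lt_or_gt_of_ne hne with hlt | hlt
  · rw [max_comm, abs_sub_comm, sub_right_comm (1 : ℝ) (1 / (x : ℝ))]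
    exact habc.rpow_le_abs_sub_of_lt hε.le hκ hb.ne' ha.ne' (by omega) (by omega) hlt
  · exact habc.rpow_le_abs_sub_of_lt hε.le hκ ha.ne' hb.ne' (by omega) (by omega) hlt
end
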